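/- arXiv:1512.02054 — 6 statements merged into one kernel-verified Lean document; each statement's English description precedes it below -/
import Mathlib

section
/- For all integers t ≥ 2 and k ≥ 2 with t ≤ k, the approximation factor α = √(1 - (2k-1)/(t² + k²)) satisfies α ≥ √10/5. -/
theorem stmt_4 (t k : ℤ) (ht : 1 ≤ t) (hk : 2 ≤ k) (htk : t ≤ k) :
    Real.sqrt 10 / 5 ≤ Real.sqrt (1 - (2*(k:ℝ) - 1) / ((t:ℝ)^2 + (k:ℝ)^2)) := by
  have ht' : (1:ℝ) ≤ (t:ℝ) := by exact_mod_cast ht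
  have hk' : (2:ℝ) ≤ (k:ℝ) := by exact_mod_cast hk
  have hden : (0:ℝ) < (t:ℝ)^2 + (k:ℝ)^2 := by nlinarith
  have key : (2:ℝ)/5 ≤ 1 - (2*(k:ℝ) - 1) / ((t:ℝ)^2 + (k:ℝ)^2) := by
    have hq : (2*(k:ℝ) - 1) / ((t:ℝ)^2 + (k:ℝ)^2) ≤ 3/5 := by
      rw [div_le_iff₀ hden]
      nlinarith [sq_nonneg ((t:ℝ) - 1), sq_nonneg ((k:ℝ) - 2)]
    linarith
  have h0 : (0:ℝ) ≤ Real.sqrt 10 / 5 := by positivity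
  have hsq : (Real.sqrt 10 / 5)^2 = 2/5 := by
    rw [div_pow, Real.sq_sqrt (by norm_num : (10:ℝ) ≥ 0)]
    norm_num
  rw [Real.le_sqrt h0] <;> linarith [hsq]
end

section
/- For n = 2k+1 with k ≥ 1, the cyclic tour on points 1, 2, ..., n on a line given by the successor map σ(j) = j + k + 1 if j ≤ k and σ(j) = j - k if j > k has every step of length k or k+1; in particular the minimum edge length of this tour is k. -/
theorem stmt_9 (k : ℕ) (hk : 1 ≤ k) (n : ℕ) (hn : n = 2*k + 1)
    (σ : ℕ → ℕ) (hσ : ∀ j, σ j = if j ≤ k then j + k + 1 else j - k) :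
    (∀ j ∈ Finset.Icc 1 n, |(σ j : ℤ) - (j : ℤ)| = k ∨ |(σ j : ℤ) - (j : ℤ)| = k + 1) ∧
    (∃ j ∈ Finset.Icc 1 n, |(σ j : ℤ) - (j : ℤ)| = k) := by
  subst hn
  constructor
  · intro j hj
    simp only [Finset.mem_Icc] at hj
    rw [hσ]
    by_cases h : j ≤ k
    · right
      rw [if_pos h]
      push_cast
      rw [abs_of_nonneg (by omega)]
      ring
    · left
      rw [if_neg h]
      have : (↑(j - k) : ℤ) = j - k := by omega
      rw [this, abs_of_nonpos (by omega)]
      ring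
  · refine ⟨k + 1, by simp; omega, ?_⟩
    rw [hσ, if_neg (by omega)]
    have : (↑(k + 1 - k) : ℤ) = 1 := by norm_num
    rw [this, abs_of_nonpos (by omega)]
    push_cast; ring
end

section
/- For n = 2k with k ≥ 2 even, the permutation σ of {1, ..., n} defined by σ(j) = j + k + 1 if j ≤ k and j odd; σ(j) = j + k - 1 if j ≤ k and j even; σ(j) = j - (k+1) if k+1 < j < n and j odd; σ(j) = j - (k-1) if k+1 < j < n and j even; σ(j) = j - k if j = k+1 or j = n, is a cyclic permutation of {1, ..., n}. -/
def fc (k i : Nat) : Nat :=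
  if i < k then (if i % 2 = 0 then i + 1 else k + i + 1)
  else (if i % 2 = 0 then 2 * k - i else 3 * k - i)

def gc (k j : Nat) : Nat :=
  if j <= k then (if j % 2 = 1 then j - 1 else 2 * k - j)
  else (if j % 2 = 1 then 3 * k - j else j - k - 1)

lemma fc_range (k i : Nat) (hk : 2 <= k) (hke : k % 2 = 0) (hi : i < 2 * k) :
    1 <= fc k i /\ fc k i <= 2 * k := by
  unfold fc; split_ifs <;> omega

lemma gc_fc (k i : Nat) (hk : 2 <= k) (hke : k % 2 = 0) (hi : i < 2 * k) :
    gc k (fc k i) = i := by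
  unfold fc gc; split_ifs <;> omega

lemma fc_gc (k j : Nat) (hk : 2 <= k) (hke : k % 2 = 0) (h1 : 1 <= j) (h2 : j <= 2 * k) :
    fc k (gc k j) = j /\ gc k j < 2 * k := by
  unfold fc gc; split_ifs <;> omega

lemma step_lem (k : Nat) (hk : 2 <= k) (hke : k % 2 = 0) (s : Nat -> Nat)
    (hs : forall j, s j =
      if j = k + 1 \/ j = 2 * k then j - k
      else if j <= k then (if Odd j then j + k + 1 else j + k - 1)
      else (if Odd j then j - (k+1) else j - (k-1)))
    (i : Nat) (hi : i < 2 * k) :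
    s (fc k i) = fc k ((i + 1) % (2 * k)) := by
  have key : forall m, ((i + 1 < 2 * k /\ m = i + 1) \/ (i + 1 = 2 * k /\ m = 0)) -> s (fc k i) = fc k m := by
    intro m hm
    rcases Nat.lt_or_ge i k with hik | hik <;>
      rcases Nat.mod_two_eq_zero_or_one i with hp | hp
    . have hfi : fc k i = i + 1 := by unfold fc; rw [if_pos hik, if_pos hp]
      rw [hfi, hs]; unfold fc; simp only [Nat.odd_iff]; split_ifs <;> omega
    . have hfi : fc k i = k + i + 1 := by unfold fc; rw [if_pos hik, if_neg (by omega)]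
      rw [hfi, hs]; unfold fc; simp only [Nat.odd_iff]; split_ifs <;> omega
    . have hfi : fc k i = 2 * k - i := by unfold fc; rw [if_neg (by omega), if_pos hp]
      rw [hfi, hs]; unfold fc; simp only [Nat.odd_iff]; split_ifs <;> omega
    . have hfi : fc k i = 3 * k - i := by unfold fc; rw [if_neg (by omega), if_neg (by omega)]
      rw [hfi, hs]; unfold fc; simp only [Nat.odd_iff]; split_ifs <;> omega
  apply key
  rcases Nat.lt_or_ge (i + 1) (2 * k) with h | h
  . exact Or.inl ⟨h, Nat.mod_eq_of_lt h⟩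
  . have h' : i + 1 = 2 * k := by omega
    exact Or.inr ⟨h', by rw [h']; exact Nat.mod_self _⟩

lemma iter_lem (k : Nat) (hk : 2 <= k) (hke : k % 2 = 0) (s : Nat -> Nat)
    (hs : forall j, s j =
      if j = k + 1 \/ j = 2 * k then j - k
      else if j <= k then (if Odd j then j + k + 1 else j + k - 1)
      else (if Odd j then j - (k+1) else j - (k-1))) :
    forall p i, i < 2 * k -> s^[p] (fc k i) = fc k ((i + p) % (2 * k)) := by
  intro p
  induction p with
  | zero => intro i hi; simp [Nat.mod_eq_of_lt hi]
  | succ p ih =>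
    intro i hi
    rw [Function.iterate_succ_apply', ih i hi]
    have h2 : (i + p) % (2 * k) < 2 * k := Nat.mod_lt _ (by omega)
    rw [step_lem k hk hke s hs _ h2, Nat.mod_add_mod, add_assoc]

theorem stmt_10 (k : ℕ) (hk : 2 ≤ k) (hkeven : Even k) (n : ℕ) (hn : n = 2*k)
    (σ : ℕ → ℕ)
    (hσ : ∀ j, σ j =
      if j = k + 1 ∨ j = n then j - k
      else if j ≤ k then (if Odd j then j + k + 1 else j + k - 1)
      else (if Odd j then j - (k+1) else j - (k-1))) :
    (∀ j ∈ Finset.Icc 1 n, σ j ∈ Finset.Icc 1 n) ∧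
    (∀ j ∈ Finset.Icc 1 n, σ^[n] j = j ∧ ∀ p, 0 < p → p < n → σ^[p] j ≠ j) := by
  subst hn
  have hke : k % 2 = 0 := Nat.even_iff.mp hkeven
  constructor
  . intro j hj
    simp only [Finset.mem_Icc] at hj ⊢
    obtain ⟨hfg, hi⟩ := fc_gc k j hk hke hj.1 hj.2
    have hstep := step_lem k hk hke σ hσ (gc k j) hi
    rw [hfg] at hstep
    rw [hstep]
    exact fc_range k _ hk hke (Nat.mod_lt _ (by omega))
  . intro j hj
    simp only [Finset.mem_Icc] at hj
    obtain ⟨hfg, hi⟩ := fc_gc k j hk hke hj.1 hj.2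
    constructor
    . have h := iter_lem k hk hke σ hσ (2 * k) (gc k j) hi
      rw [hfg] at h
      rw [h, Nat.add_mod_right, Nat.mod_eq_of_lt hi, hfg]
    . intro p hp0 hpn hcontra
      have h1 := iter_lem k hk hke σ hσ p (gc k j) hi
      rw [hfg] at h1
      rw [h1] at hcontra
      have hm : (gc k j + p) % (2 * k) < 2 * k := Nat.mod_lt _ (by omega)
      have h2 := gc_fc k _ hk hke hm
      rw [hcontra] at h2
      rcases Nat.lt_or_ge (gc k j + p) (2 * k) with h | h
      . rw [Nat.mod_eq_of_lt h] at h2; omega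
      . rw [Nat.mod_eq_sub_mod h, Nat.mod_eq_of_lt (by omega)] at h2; omega
end

section
/- For n = 2k with k ≥ 1 odd, the permutation σ of {1, ..., n} defined by σ(j) = j + k + 1 if j < k and j odd; σ(j) = j + k - 1 if j < k and j even; σ(j) = j - (k+1) if j > k+1 and j even; σ(j) = j - (k-1) if j > k+1 and j odd; σ(k) = 2k; σ(k+1) = 1, is a cyclic permutation of {1, ..., n}, and every j satisfies k - 1 ≤ |σ(j) - j| ≤ k + 1. -/
set_option maxHeartbeats 1000000

/-- The orbit parametrization: `g k t` is the `t`-th element of the cycle of σ starting at 1. -/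
def gOrb (k t : ℕ) : ℕ :=
  if t % 2 = 1 then (if t < k then k + 1 + t else 3*k - t)
  else (if t < k then t + 1 else 2*k - t)

/-- Inverse of the orbit parametrization. -/
def gInv (k j : ℕ) : ℕ :=
  if j % 2 = 1 then (if j ≤ k then j - 1 else j - (k+1))
  else (if k < j then 3*k - j else 2*k - j)

lemma gInv_gOrb (k : ℕ) (hk : 1 ≤ k) (hk2 : k % 2 = 1) (t : ℕ) (ht : t < 2*k) :
    gInv k (gOrb k t) = t := by
  simp only [gOrb, gInv]
  split_ifs <;> omega

lemma gOrb_gInv (k : ℕ) (hk : 1 ≤ k) (hk2 : k % 2 = 1) (j : ℕ) (hj1 : 1 ≤ j)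
    (hj2 : j ≤ 2*k) : gOrb k (gInv k j) = j ∧ gInv k j < 2*k := by
  simp only [gOrb, gInv]
  split_ifs <;> omega

lemma step_gOrb (k : ℕ) (hk : 1 ≤ k) (hk2 : k % 2 = 1) (σ : ℕ → ℕ)
    (hσ : ∀ j, σ j =
      if j = k then 2*k
      else if j = k + 1 then 1
      else if j < k then (if Odd j then j + k + 1 else j + k - 1)
      else (if Even j then j - (k+1) else j - (k-1)))
    (t : ℕ) (ht : t < 2*k) : σ (gOrb k t) = gOrb k ((t+1) % (2*k)) := by
  by_cases hke : t + 1 = 2*k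
  · rw [show (t+1) % (2*k) = 0 by rw [hke]; exact Nat.mod_self _, hσ]
    simp only [gOrb, Nat.odd_iff, Nat.even_iff]
    split_ifs <;> first | omega | exact absurd trivial (by assumption) | exact False.elim (by assumption)
  · rw [Nat.mod_eq_of_lt (by omega), hσ]
    simp only [gOrb, Nat.odd_iff, Nat.even_iff]
    split_ifs <;> first | omega | exact absurd trivial (by assumption) | exact False.elim (by assumption)

lemma iter_gOrb (k : ℕ) (hk : 1 ≤ k) (σ : ℕ → ℕ)
    (hstep : ∀ t, t < 2*k → σ (gOrb k t) = gOrb k ((t+1) % (2*k))) :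
    ∀ p t, t < 2*k → σ^[p] (gOrb k t) = gOrb k ((t+p) % (2*k)) := by
  intro p
  induction p with
  | zero => intro t ht; simp [Nat.mod_eq_of_lt ht]
  | succ p ih =>
    intro t ht
    rw [Function.iterate_succ_apply, hstep t ht, ih _ (Nat.mod_lt _ (by omega))]
    congr 1
    conv_rhs => rw [show t + (p+1) = (t+1) + p by omega]
    exact Nat.mod_add_mod _ _ _

theorem stmt_12 (k : ℕ) (hk : 1 ≤ k) (hkodd : Odd k) (n : ℕ) (hn : n = 2*k)
    (σ : ℕ → ℕ)
    (hσ : ∀ j, σ j =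
      if j = k then 2*k
      else if j = k + 1 then 1
      else if j < k then (if Odd j then j + k + 1 else j + k - 1)
      else (if Even j then j - (k+1) else j - (k-1))) :
    (∀ j ∈ Finset.Icc 1 n, σ j ∈ Finset.Icc 1 n) ∧
    (∀ j ∈ Finset.Icc 1 n, σ^[n] j = j ∧ ∀ p, 0 < p → p < n → σ^[p] j ≠ j) ∧
    (∀ j ∈ Finset.Icc 1 n,
      (k : ℤ) - 1 ≤ |(σ j : ℤ) - (j : ℤ)| ∧ |(σ j : ℤ) - (j : ℤ)| ≤ (k : ℤ) + 1) := by
  subst hn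
  have hk2 : k % 2 = 1 := Nat.odd_iff.mp hkodd
  have hstep := step_gOrb k hk hk2 σ hσ
  have hiter := iter_gOrb k hk σ hstep
  refine ⟨?_, ?_, ?_⟩
  · intro j hj
    rw [Finset.mem_Icc] at hj ⊢
    rw [hσ]
    simp only [Nat.odd_iff, Nat.even_iff]
    split_ifs <;> first | omega | exact absurd trivial (by assumption) | exact False.elim (by assumption)
  · intro j hj
    rw [Finset.mem_Icc] at hj
    obtain ⟨hgg, hlt⟩ := gOrb_gInv k hk hk2 j hj.1 hj.2
    set t := gInv k j with ht
    constructor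
    · have h1 := hiter (2*k) t hlt
      rw [hgg, Nat.add_mod_right, Nat.mod_eq_of_lt hlt, hgg] at h1
      exact h1
    · intro p hp1 hp2 hcon
      have h1 := hiter p t hlt
      rw [hgg, hcon] at h1
      -- h1 : j = gOrb k ((t+p) % (2*k))
      have h2 := gInv_gOrb k hk hk2 ((t+p) % (2*k)) (Nat.mod_lt _ (by omega))
      rw [← h1, ← ht] at h2
      -- h2 : t = (t+p) % (2*k)
      have hm : (t+p) % (2*k) = t + p ∨ (t+p) % (2*k) + 2*k = t + p := by
        rcases Nat.lt_or_ge (t+p) (2*k) with h | h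
        · exact Or.inl (Nat.mod_eq_of_lt h)
        · right
          rw [Nat.mod_eq_sub_mod h, Nat.mod_eq_of_lt (by omega)]
          omega
      omega
  · intro j hj
    rw [Finset.mem_Icc] at hj
    have hv := hσ j
    simp only [Nat.odd_iff, Nat.even_iff] at hv
    rcases abs_cases ((σ j : ℤ) - (j : ℤ)) with ⟨h1, h2⟩ | ⟨h1, h2⟩ <;>
      rw [h1] <;> split_ifs at hv <;> omega
end

section
/- Let n = 2k with k ≥ 2 and m = 2. In any Hamiltonian cycle on the complete graph over the regular 2 × n grid (points (x,y) with 1 ≤ x ≤ n, 1 ≤ y ≤ 2), the minimum Euclidean edge length is at most √(1 + (k-1)²). -/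
/-- If a grid point `q` is strictly farther than `√(1+(k-1)²)` from a central
point `(k, c)` (with `c ∈ {1,2}`), then `q` must lie in the last column. -/
lemma key_far (k : ℕ) (hk : 2 ≤ k) (q : ℤ × ℤ)
    (hq : 1 ≤ q.1 ∧ q.1 ≤ 2*(k:ℤ) ∧ 1 ≤ q.2 ∧ q.2 ≤ 2) (c : ℤ) (hc : c = 1 ∨ c = 2)
    (h : (1 + ((k:ℤ)-1)^2 : ℤ) < ((k:ℤ) - q.1)^2 + (c - q.2)^2) :
    q = (2*(k:ℤ), 1) ∨ q = (2*(k:ℤ), 2) := by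
  obtain ⟨h1, h2, h3, h4⟩ := hq
  have hk' : (2:ℤ) ≤ (k:ℤ) := by exact_mod_cast hk
  have hx : q.1 = 2*(k:ℤ) := by
    by_contra hx
    have h2' : q.1 ≤ 2*(k:ℤ) - 1 := by omega
    have e1 : ((k:ℤ) - q.1)^2 ≤ ((k:ℤ)-1)^2 := by
      nlinarith [mul_nonneg (by linarith : (0:ℤ) ≤ q.1 - 1)
        (by linarith : (0:ℤ) ≤ 2*(k:ℤ) - 1 - q.1)]
    have e2 : (c - q.2)^2 ≤ 1 := by rcases hc with rfl | rfl <;> nlinarith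
    linarith
  have hy : q.2 = 1 ∨ q.2 = 2 := by omega
  rcases hy with hy | hy
  · exact Or.inl (Prod.ext hx hy)
  · exact Or.inr (Prod.ext hx hy)

theorem stmt_15 (k n : ℕ) (hk : 2 ≤ k) (hn : n = 2*k)
    (dist : ℤ × ℤ → ℤ × ℤ → ℝ)
    (hdist : ∀ p q, dist p q = Real.sqrt (((p.1 - q.1 : ℤ) : ℝ)^2 + ((p.2 - q.2 : ℤ) : ℝ)^2))
    (f : ZMod (2 * n) → ℤ × ℤ)
    (hinj : Function.Injective f)
    (hrange : ∀ p : ℤ × ℤ,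
      (1 ≤ p.1 ∧ p.1 ≤ (n : ℤ) ∧ 1 ≤ p.2 ∧ p.2 ≤ 2) ↔ p ∈ Set.range f) :
    ∃ i : ZMod (2 * n), dist (f i) (f (i + 1)) ≤ Real.sqrt (1 + ((k:ℝ) - 1)^2) := by
  by_contra hcon
  push_neg at hcon
  subst hn
  have hk' : (2:ℤ) ≤ (k:ℤ) := by exact_mod_cast hk
  -- every value of f is a grid point
  have hmem : ∀ i, 1 ≤ (f i).1 ∧ (f i).1 ≤ 2*(k:ℤ) ∧ 1 ≤ (f i).2 ∧ (f i).2 ≤ 2 := by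
    intro i
    have := (hrange (f i)).mpr ⟨i, rfl⟩
    push_cast at this
    exact this
  -- for any index with a strictly long edge, pass to the squared (integer) inequality
  have hsq : ∀ i : ZMod (2*(2*k)),
      (1 + ((k:ℤ)-1)^2 : ℤ) < ((f i).1 - (f (i+1)).1)^2 + ((f i).2 - (f (i+1)).2)^2 := by
    intro i
    have h := hcon i
    rw [hdist] at h
    by_contra hle
    push_neg at hle
    have hle' : ((((f i).1 - (f (i+1)).1 : ℤ):ℝ)^2 + (((f i).2 - (f (i+1)).2 : ℤ):ℝ)^2)
        ≤ 1 + ((k:ℝ) - 1)^2 := by exact_mod_cast hle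
    exact absurd (Real.sqrt_le_sqrt hle') (not_le.mpr h)
  -- the two central points (k,1), (k,2)
  obtain ⟨a, ha⟩ := (hrange ((k:ℤ), 1)).mp (by refine ⟨by linarith, ?_, by norm_num, by norm_num⟩; push_cast; linarith)
  obtain ⟨b, hb⟩ := (hrange ((k:ℤ), 2)).mp (by refine ⟨by linarith, ?_, by norm_num, by norm_num⟩; push_cast; linarith)
  have hab : a ≠ b := by
    intro h; rw [h, hb] at ha; exact absurd (congrArg Prod.snd ha) (by norm_num)
  -- both neighbours of a central point lie in the last column
  have hedge : ∀ (j : ZMod (2*(2*k))) (c : ℤ), c = 1 ∨ c = 2 → f j = ((k:ℤ), c) →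
      (f (j+1) = (2*(k:ℤ),1) ∨ f (j+1) = (2*(k:ℤ),2)) ∧
      (f (j-1) = (2*(k:ℤ),1) ∨ f (j-1) = (2*(k:ℤ),2)) := by
    intro j c hc hj
    constructor
    · apply key_far k hk _ (hmem (j+1)) c hc
      have := hsq j
      rw [hj] at this
      nlinarith [this]
    · apply key_far k hk _ (hmem (j-1)) c hc
      have := hsq (j-1)
      rw [sub_add_cancel, hj] at this
      nlinarith [this]
  obtain ⟨Pa1, Pa2⟩ := hedge a 1 (Or.inl rfl) ha
  obtain ⟨Pb1, Pb2⟩ := hedge b 2 (Or.inr rfl) hb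
  -- index arithmetic in ZMod (4k)
  have h2ne : ((2:ℕ) : ZMod (2*(2*k))) ≠ 0 := by
    intro h
    rw [ZMod.natCast_eq_zero_iff] at h
    have := Nat.le_of_dvd (by norm_num) h
    omega
  have h4ne : ((4:ℕ) : ZMod (2*(2*k))) ≠ 0 := by
    intro h
    rw [ZMod.natCast_eq_zero_iff] at h
    have := Nat.le_of_dvd (by norm_num) h
    omega
  have hpm : ∀ j : ZMod (2*(2*k)), j + 1 ≠ j - 1 := by
    intro j h
    apply h2ne
    push_cast
    linear_combination h
  have hA : f (a+1) ≠ f (a-1) := fun h => hpm a (hinj h)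
  have hB : f (b+1) ≠ f (b-1) := fun h => hpm b (hinj h)
  have contra4 : a + 1 = b - 1 → a - 1 = b + 1 → False := by
    intro e1 e2
    apply h4ne
    push_cast
    linear_combination e1 - e2
  have contra0 : a + 1 = b + 1 → False := by
    intro e
    exact hab (by linear_combination e)
  rcases Pa1 with h1 | h1 <;> rcases Pb1 with h3 | h3
  · exact contra0 (hinj (h1.trans h3.symm))
  · have h2 : f (a-1) = (2*(k:ℤ),2) := by
      rcases Pa2 with h2 | h2
      · exact absurd (h1.trans h2.symm) hA
      · exact h2
    have h4 : f (b-1) = (2*(k:ℤ),1) := by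
      rcases Pb2 with h4 | h4
      · exact h4
      · exact absurd (h3.trans h4.symm) hB
    exact contra4 (hinj (h1.trans h4.symm)) (hinj (h2.trans h3.symm))
  · have h2 : f (a-1) = (2*(k:ℤ),1) := by
      rcases Pa2 with h2 | h2
      · exact h2
      · exact absurd (h1.trans h2.symm) hA
    have h4 : f (b-1) = (2*(k:ℤ),2) := by
      rcases Pb2 with h4 | h4
      · exact absurd (h3.trans h4.symm) hB
      · exact h4
    exact contra4 (hinj (h1.trans h4.symm)) (hinj (h2.trans h3.symm))
  · exact contra0 (hinj (h1.trans h3.symm))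
end

section
/- For all integers t ≥ 1 and k ≥ 2 with t ≤ k, √(t² + (k-1)²) ≥ (√10/5) · √(t² + k²). -/
theorem stmt_18 (t k : ℤ) (ht : 1 ≤ t) (hk : 2 ≤ k) (htk : t ≤ k) :
    Real.sqrt 10 / 5 * Real.sqrt ((t:ℝ)^2 + (k:ℝ)^2)
      ≤ Real.sqrt ((t:ℝ)^2 + ((k:ℝ) - 1)^2) := by
  have ht' : (1:ℝ) ≤ (t:ℝ) := by exact_mod_cast ht
  have hk' : (2:ℝ) ≤ (k:ℝ) := by exact_mod_cast hk
  have key : 10 * ((t:ℝ)^2 + (k:ℝ)^2) ≤ 25 * ((t:ℝ)^2 + ((k:ℝ) - 1)^2) := by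
    nlinarith [sq_nonneg ((t:ℝ) - 1), sq_nonneg ((k:ℝ) - 2)]
  have h := Real.sqrt_le_sqrt key
  rw [Real.sqrt_mul (by norm_num), Real.sqrt_mul (by norm_num)] at h
  have h25 : Real.sqrt 25 = 5 := by
    rw [show (25:ℝ) = 5 ^ 2 by norm_num, Real.sqrt_sq (by norm_num)]
  rw [h25] at h
  rw [div_mul_eq_mul_div, div_le_iff₀ (by norm_num : (0:ℝ) < 5)]
  linarith
end
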